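/- arXiv:2005.00213 — 3 statements merged into one kernel-verified Lean document; each statement's English description precedes it below -/
import Mathlib

section
/- Let A be a commutative group, X a commutative partial monoid, and i : A → X an injective homomorphism such that i(a) + x is defined for all a ∈ A, x ∈ X. Then any trivialisation φ : X → A × X/A (a homomorphism with φ ∘ i = in₁ and proj₂ ∘ φ = π, where π : X → X/A is the quotient by the action a·x = i(a)+x) is an isomorphism, with inverse (a,[x]) ↦ x + i(a − proj₁(φ(x))). -/
/-- A commutative partial monoid: addition is partially defined (via `Option`),
commutative, unital, and associative where defined. -/
structure PCM (X : Type*) where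
  add : X → X → Option X
  zero : X
  comm : ∀ x y, add x y = add y x
  zero_add : ∀ x, add zero x = some x
  assoc : ∀ x y z xy yz, add x y = some xy → add y z = some yz →
    add xy z = add x yz

/-- Homomorphism of commutative partial monoids. -/
def PCM.IsHom {X Y : Type*} (MX : PCM X) (MY : PCM Y) (f : X → Y) : Prop :=
  f MX.zero = MY.zero ∧
  ∀ x y z, MX.add x y = some z → MY.add (f x) (f y) = some (f z)

/-- `i : A → X` is an injective homomorphism of the group `A` into the
partial monoid `X` such that `i a + x` is always defined. -/
structure EmbedData {A X : Type*} [AddCommGroup A] (MX : PCM X) (i : A → X) : Prop where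
  inj : Function.Injective i
  map_zero : i 0 = MX.zero
  map_add : ∀ a b, MX.add (i a) (i b) = some (i (a + b))
  total : ∀ a x, (MX.add (i a) x).isSome

/-- The action `l_A : (a, x) ↦ i a + x` is free. -/
def FreeAction {A X : Type*} [AddCommGroup A] (MX : PCM X) (i : A → X) : Prop :=
  ∀ a a' x y, MX.add (i a) x = some y → MX.add (i a') x = some y → a = a'

/-- `π : X → Q` presents `Q` as the orbit space `X/A` of the action of `A` on `X`
via `i`, with the induced partial monoid structure. -/
structure QuotData {A X Q : Type*} [AddCommGroup A] (MX : PCM X) (MQ : PCM Q)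
    (i : A → X) (π : X → Q) : Prop where
  surj : Function.Surjective π
  orbit : ∀ x y, π x = π y ↔ ∃ a, MX.add (i a) x = some y
  hom : MX.IsHom MQ π
  lift : ∀ x y q, MQ.add (π x) (π y) = some q → (MX.add x y).isSome

/-- A left splitting of `A → X → X/A`: a homomorphism `s : X → A` with `s ∘ i = id`. -/
def IsLeftSplit {A X : Type*} [AddCommGroup A] (MX : PCM X) (i : A → X) (s : X → A) : Prop :=
  s MX.zero = 0 ∧
  (∀ x y z, MX.add x y = some z → s z = s x + s y) ∧
  (∀ a, s (i a) = a)

/-- A right splitting of `A → X → X/A`: a homomorphism `h : X/A → X` with `π ∘ h = id`. -/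
def IsRightSplit {X Q : Type*} (MX : PCM X) (MQ : PCM Q)
    (π : X → Q) (h : Q → X) : Prop :=
  MQ.IsHom MX h ∧ ∀ q, π (h q) = q

/-- A trivialisation `φ : X → A × X/A`: a homomorphism (into the product
partial monoid) with `φ ∘ i = in₁` and `proj₂ ∘ φ = π`. -/
def IsTriv {A X Q : Type*} [AddCommGroup A] (MX : PCM X) (MQ : PCM Q)
    (i : A → X) (π : X → Q) (φ : X → A × Q) : Prop :=
  φ MX.zero = (0, MQ.zero) ∧
  (∀ x y z, MX.add x y = some z →
    MQ.add (φ x).2 (φ y).2 = some (φ z).2 ∧ (φ z).1 = (φ x).1 + (φ y).1) ∧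
  (∀ a, φ (i a) = (a, MQ.zero)) ∧
  (∀ x, (φ x).2 = π x)

/-- A local trivialisation `φ : C → A × C/A` of the restriction of the sequence
to a submonoid `i(A) ⊆ C ⊆ X` (presented as a function on all of `X` whose
values off `C` are irrelevant). -/
def IsLocalTriv {A X Q : Type*} [AddCommGroup A] (MX : PCM X) (MQ : PCM Q)
    (i : A → X) (π : X → Q) (C : Set X) (φ : X → A × Q) : Prop :=
  (∀ x y z, x ∈ C → y ∈ C → MX.add x y = some z →
    MQ.add (φ x).2 (φ y).2 = some (φ z).2 ∧ (φ z).1 = (φ x).1 + (φ y).1) ∧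
  (∀ a, φ (i a) = (a, MQ.zero)) ∧
  (∀ x, x ∈ C → (φ x).2 = π x)

/-- `C` is a total submonoid of the partial monoid `X` containing `i(A)`. -/
def IsSubPCM {A X : Type*} [AddCommGroup A] (MX : PCM X) (i : A → X) (C : Set X) : Prop :=
  MX.zero ∈ C ∧
  (∀ a, i a ∈ C) ∧
  (∀ x y, x ∈ C → y ∈ C → (MX.add x y).isSome) ∧
  (∀ x y z, x ∈ C → y ∈ C → MX.add x y = some z → z ∈ C)

/-!
A trivialisation is `A`-equivariant over `X/A`: `φ (x + i b) = ((φ x).1 + b, π x)`. Since the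
fibres of `π = proj₂ ∘ φ` are the orbits and `A` acts freely on itself, `φ` is injective, and
`x + i (a - (φ x).1)`, which exists because `i a + x` is always defined, is a preimage of
`(a, π x)`.
-/

theorem PCM.add_zero {X : Type*} (M : PCM X) (x : X) : M.add x M.zero = some x := by
  rw [M.comm, M.zero_add]

theorem EmbedData.exists_add_eq {A X : Type*} [AddCommGroup A] {MX : PCM X} {i : A → X}
    (hemb : EmbedData MX i) (x : X) (a : A) : ∃ y, MX.add x (i a) = some y := by
  rw [MX.comm]
  exact Option.isSome_iff_exists.mp (hemb.total a x)

namespace IsTriv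

variable {A X Q : Type*} [AddCommGroup A] {MX : PCM X} {MQ : PCM Q} {i : A → X} {π : X → Q}
  {φ : X → A × Q}

theorem apply_of_add_eq (hφ : IsTriv MX MQ i π φ) {x y : X} {b : A}
    (hy : MX.add x (i b) = some y) : φ y = ((φ x).1 + b, π x) := by
  obtain ⟨-, hhom, hi, hπ⟩ := hφ
  obtain ⟨hsnd, hfst⟩ := hhom x (i b) y hy
  rw [hi, MQ.add_zero, hπ] at hsnd
  rw [hi] at hfst
  exact Prod.ext hfst (Option.some_injective _ hsnd).symm

theorem apply_of_add_eq_sub (hφ : IsTriv MX MQ i π φ) {x y : X} {a : A}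
    (hy : MX.add x (i (a - (φ x).1)) = some y) : φ y = (a, π x) := by
  rw [hφ.apply_of_add_eq hy, add_sub_cancel]

theorem injective (hφ : IsTriv MX MQ i π φ) (hemb : EmbedData MX i)
    (hquot : QuotData MX MQ i π) : Function.Injective φ := by
  intro x y hxy
  have hπ : π x = π y := by rw [← hφ.2.2.2, ← hφ.2.2.2, hxy]
  obtain ⟨a, ha⟩ := (hquot.orbit x y).mp hπ
  have hφy : φ y = ((φ x).1 + a, π x) := hφ.apply_of_add_eq (by rwa [MX.comm])
  have hfst : (φ x).1 + a = (φ x).1 := congrArg Prod.fst (hφy.symm.trans hxy.symm)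
  rw [add_eq_left.mp hfst, hemb.map_zero, MX.zero_add] at ha
  exact Option.some_injective _ ha

theorem surjective (hφ : IsTriv MX MQ i π φ) (hemb : EmbedData MX i)
    (hquot : QuotData MX MQ i π) : Function.Surjective φ := by
  rintro ⟨a, q⟩
  obtain ⟨x, rfl⟩ := hquot.surj q
  obtain ⟨y, hy⟩ := hemb.exists_add_eq x (a - (φ x).1)
  exact ⟨y, hφ.apply_of_add_eq_sub hy⟩

end IsTriv

/-- Lemma 3.1: any trivialisation `φ : X → A × X/A` of the sequence
`A → X → X/A` is an isomorphism; its inverse sends `(a, [x])` to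
`x + i(a − proj₁(φ x))` (expressed here by: any `y = x + i(a − (φ x).1)`
satisfies `φ y = (a, π x)`). -/
theorem trivialisation_is_isomorphism {A X Q : Type*} [AddCommGroup A]
    (MX : PCM X) (MQ : PCM Q) (i : A → X) (π : X → Q)
    (hemb : EmbedData MX i) (hquot : QuotData MX MQ i π)
    (φ : X → A × Q) (hφ : IsTriv MX MQ i π φ) :
    Function.Bijective φ ∧
    ∀ x a y, MX.add x (i (a - (φ x).1)) = some y → φ y = (a, π x) :=
  ⟨⟨hφ.injective hemb hquot, hφ.surjective hemb hquot⟩,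
    fun _ _ _ => hφ.apply_of_add_eq_sub⟩
end

section
/- Let A be a commutative group, X a commutative partial monoid, i : A → X injective with the action l_A(a,x) = i(a)+x free. For every right splitting h : X/A → X (a homomorphism with π ∘ h = id), there is a unique function s : X → A satisfying h(π(x)) = x − i(s(x)) for all x, and this s is a left splitting; moreover ⟨s, π⟩ is a trivialisation and this construction Φ is a left inverse to the map φ ↦ φ⁻¹ ∘ in₂ from trivialisations to right splittings. -/
section

variable {A X Q : Type*} [AddCommGroup A] {MX : PCM X} {MQ : PCM Q} {i : A → X} {π : X → Q}

namespace EmbedData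

theorem add_neg_eq_zero (hemb : EmbedData MX i) (a : A) :
    MX.add (i a) (i (-a)) = some MX.zero := by
  rw [hemb.map_add, add_neg_cancel, hemb.map_zero]

theorem add_of_add_neg (hemb : EmbedData MX i) {a : A} {x c : X}
    (hx : MX.add x (i (-a)) = some c) : MX.add (i a) c = some x := by
  rw [MX.comm] at hx
  rw [← MX.assoc _ _ _ _ _ (hemb.add_neg_eq_zero a) hx, MX.zero_add]

end EmbedData

theorem QuotData.map_embed_eq_zero (hquot : QuotData MX MQ i π) (hemb : EmbedData MX i)
    (a : A) : π (i a) = MQ.zero := by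
  have hzero : π (i a) = π MX.zero := by
    rw [hquot.orbit]
    exact ⟨-a, by rw [MX.comm]; exact hemb.add_neg_eq_zero a⟩
  rw [hzero, hquot.hom.1]

theorem FreeAction.eq_of_add_neg (hfree : FreeAction MX i) {a b : A} {x y : X}
    (ha : MX.add x (i (-a)) = some y) (hb : MX.add x (i (-b)) = some y) : a = b := by
  rw [MX.comm] at ha hb
  exact neg_injective (hfree _ _ _ _ ha hb)

theorem QuotData.exists_add_neg_eq (hquot : QuotData MX MQ i π) {h : Q → X}
    (hh : IsRightSplit MX MQ π h) (x : X) : ∃ a, MX.add x (i (-a)) = some (h (π x)) := by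
  obtain ⟨a, ha⟩ := (hquot.orbit x (h (π x))).1 (hh.2 (π x)).symm
  exact ⟨-a, by rw [neg_neg, MX.comm]; exact ha⟩

section Decomposition

variable {h : Q → X} {s : X → A}

theorem apply_embed_of_decomposition (hemb : EmbedData MX i) (hquot : QuotData MX MQ i π)
    (hh : IsRightSplit MX MQ π h) (hdec : ∀ x, MX.add (i (s x)) (h (π x)) = some x) (a : A) :
    s (i a) = a := by
  have hia := hdec (i a)
  rw [hquot.map_embed_eq_zero hemb, hh.1.1, MX.comm, MX.zero_add, Option.some_inj] at hia
  exact hemb.inj hia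

theorem map_add_of_decomposition (hemb : EmbedData MX i) (hquot : QuotData MX MQ i π)
    (hfree : FreeAction MX i) (hh : IsRightSplit MX MQ π h)
    (hdec : ∀ x, MX.add (i (s x)) (h (π x)) = some x) {x y z : X}
    (hxy : MX.add x y = some z) : s z = s x + s y := by
  have hhπ : MX.add (h (π y)) (h (π x)) = some (h (π z)) := by
    apply hh.1.2
    rw [MQ.comm]
    exact hquot.hom.2 _ _ _ hxy
  obtain ⟨w, hw⟩ := Option.isSome_iff_exists.1 (hemb.total (s y) (h (π z)))
  have hyw : MX.add (h (π x)) y = some w := by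
    rw [MX.comm, MX.assoc _ _ _ _ _ (hdec y) hhπ, hw]
  have hxw : MX.add (i (s x)) w = some z := by
    rw [← MX.assoc _ _ _ _ _ (hdec x) hyw, hxy]
  have hz : MX.add (i (s x + s y)) (h (π z)) = some z := by
    rw [MX.assoc _ _ _ _ _ (hemb.map_add _ _) hw, hxw]
  exact hfree _ _ _ _ (hdec z) hz

theorem isLeftSplit_of_decomposition (hemb : EmbedData MX i) (hquot : QuotData MX MQ i π)
    (hfree : FreeAction MX i) (hh : IsRightSplit MX MQ π h)
    (hdec : ∀ x, MX.add (i (s x)) (h (π x)) = some x) : IsLeftSplit MX i s := by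
  have hsi := apply_embed_of_decomposition hemb hquot hh hdec
  refine ⟨?_, fun _ _ _ => map_add_of_decomposition hemb hquot hfree hh hdec, hsi⟩
  rw [← hemb.map_zero, hsi]

end Decomposition

theorem IsLeftSplit.isTriv (hemb : EmbedData MX i) (hquot : QuotData MX MQ i π) {s : X → A}
    (hs : IsLeftSplit MX i s) : IsTriv MX MQ i π (fun x => (s x, π x)) := by
  refine ⟨?_, fun x y z hxy => ⟨hquot.hom.2 x y z hxy, hs.2.1 x y z hxy⟩, fun a => ?_,
    fun _ => rfl⟩
  · exact Prod.ext hs.1 hquot.hom.1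
  · exact Prod.ext (hs.2.2 a) (hquot.map_embed_eq_zero hemb a)

end

/-- Suppose the action `l_A` is free. For every right splitting `h : X/A → X`
there is a unique function `s : X → A` with `h(π x) = x − i(s x)` for all `x`;
this `s` is a left splitting and `⟨s, π⟩` is a trivialisation. Moreover the
construction `Φ : h ↦ ⟨s, π⟩` is a left inverse of the map
`φ ↦ φ⁻¹ ∘ in₂` from trivialisations to right splittings (the right splitting
associated to `φ` being `[x] ↦ x − i((φ x).1)`). -/
theorem right_splitting_yields_trivialisation {A X Q : Type*} [AddCommGroup A]
    (MX : PCM X) (MQ : PCM Q) (i : A → X) (π : X → Q)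
    (hemb : EmbedData MX i) (hquot : QuotData MX MQ i π)
    (hfree : FreeAction MX i) :
    (∀ h : Q → X, IsRightSplit MX MQ π h →
      ∃! s : X → A, ∀ x, MX.add x (i (-(s x))) = some (h (π x))) ∧
    (∀ (h : Q → X) (s : X → A), IsRightSplit MX MQ π h →
      (∀ x, MX.add x (i (-(s x))) = some (h (π x))) →
      IsLeftSplit MX i s ∧ IsTriv MX MQ i π (fun x => (s x, π x))) ∧
    (∀ (φ : X → A × Q) (h : Q → X), IsTriv MX MQ i π φ →
      (∀ x, MX.add x (i (-(φ x).1)) = some (h (π x))) →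
      ∀ s : X → A, (∀ x, MX.add x (i (-(s x))) = some (h (π x))) →
        s = fun x => (φ x).1) := by
  refine ⟨fun h hh => ?_, fun h s hh hs => ?_, fun φ h _ hφ s hs => ?_⟩
  · choose s hs using hquot.exists_add_neg_eq hh
    exact ⟨s, hs, fun s' hs' => funext fun x => hfree.eq_of_add_neg (hs' x) (hs x)⟩
  · have hleft := isLeftSplit_of_decomposition hemb hquot hfree hh
      fun x => hemb.add_of_add_neg (hs x)
    exact ⟨hleft, hleft.isTriv hemb hquot⟩
  · exact funext fun x => hfree.eq_of_add_neg (hs x) (hφ x)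
end

section
/- Let A, X, i, C, φ be as in the splitting lemma (l_A free, i(A) ⊆ C ⊆ X submonoid, φ a local trivialisation) and let η : X/A → X be a choice of orbit representatives agreeing with φ⁻¹ ∘ in₂ on C/A. Define β(q₁,q₂) ∈ A by η(q₁+q₂) = η(q₁) + η(q₂) + i(β(q₁,q₂)) whenever q₁+q₂ is defined. Then β is a well-defined relative 2-cocycle: β ∈ Z²(X/A, C/A; A). -/
/-- `η : X/A → X` is a set-theoretic section of `π` (a choice of orbit
representatives). -/
def IsSection {X Q : Type*} (π : X → Q) (η : Q → X) : Prop :=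
  ∀ q, π (η q) = q

/-- `η` agrees with the right splitting `φ⁻¹ ∘ in₂` determined by the local
trivialisation `φ` on `C/A`: for `x ∈ C`, `η([x]) = x − i((φ x).1)`. -/
def AgreesOnC {A X Q : Type*} [AddCommGroup A] (MX : PCM X)
    (i : A → X) (π : X → Q) (C : Set X) (φ : X → A × Q) (η : Q → X) : Prop :=
  ∀ x ∈ C, MX.add (i (-(φ x).1)) x = some (η (π x))

/-- `β : X/A × X/A → A` is the 2-cochain measuring the failure of `η` to be
a homomorphism: `η(q₁ + q₂) = η(q₁) + η(q₂) + i(β(q₁, q₂))` whenever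
`q₁ + q₂` is defined. -/
def BetaSpec {A X Q : Type*} [AddCommGroup A] (MX : PCM X) (MQ : PCM Q)
    (i : A → X) (η : Q → X) (β : Q → Q → A) : Prop :=
  ∀ q₁ q₂ q₁₂, MQ.add q₁ q₂ = some q₁₂ →
    ∃ w, MX.add (η q₁) (η q₂) = some w ∧
      MX.add (i (β q₁ q₂)) w = some (η q₁₂)

namespace PCM

variable {X : Type*} (M : PCM X)

theorem add_eq_of_add_left {e x x' y s s' : X} (hx : M.add e x = some x')
    (hs : M.add x y = some s) (hs' : M.add x' y = some s') : M.add e s = some s' :=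
  (M.assoc _ _ _ _ _ hx hs).symm.trans hs'

theorem add_eq_of_add_right {e x x' y s s' : X} (hx : M.add e x = some x')
    (hs : M.add y x = some s) (hs' : M.add y x' = some s') : M.add e s = some s' :=
  M.add_eq_of_add_left hx ((M.comm _ _).trans hs) ((M.comm _ _).trans hs')

end PCM

section Cocycle

variable {A X Q : Type*} [AddCommGroup A] {MX : PCM X} {MQ : PCM Q} {i : A → X}
  {π : X → Q} {η : Q → X} {β : Q → Q → A}

theorem EmbedData.add_add (hemb : EmbedData MX i) {a b : A} {x y z : X}
    (hb : MX.add (i b) x = some y) (ha : MX.add (i a) y = some z) :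
    MX.add (i (a + b)) x = some z :=
  (MX.assoc _ _ _ _ _ (hemb.map_add a b) hb).trans ha

theorem FreeAction.eq_zero_of_add_eq_self (hfree : FreeAction MX i) (hemb : EmbedData MX i)
    {a : A} {x : X} (ha : MX.add (i a) x = some x) : a = 0 :=
  hfree _ _ _ _ ha (by rw [hemb.map_zero, MX.zero_add])

theorem QuotData.proj_eq_of_add (hquot : QuotData MX MQ i π) {x y w : X} {q : Q}
    (hw : MX.add x y = some w) (hq : MQ.add (π x) (π y) = some q) : π w = q :=
  Option.some.inj ((hquot.hom.2 _ _ _ hw).symm.trans hq)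

theorem QuotData.exists_add_section (hquot : QuotData MX MQ i π) (hη : IsSection π η)
    {q₁ q₂ q₁₂ : Q} (hq : MQ.add q₁ q₂ = some q₁₂) :
    ∃ w, MX.add (η q₁) (η q₂) = some w ∧ π w = q₁₂ := by
  have hq' : MQ.add (π (η q₁)) (π (η q₂)) = some q₁₂ := by rw [hη, hη]; exact hq
  obtain ⟨w, hw⟩ := Option.isSome_iff_exists.mp (hquot.lift _ _ _ hq')
  exact ⟨w, hw, hquot.proj_eq_of_add hw hq'⟩

theorem exists_betaSpec (hquot : QuotData MX MQ i π) (hη : IsSection π η) :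
    ∃ β : Q → Q → A, BetaSpec MX MQ i η β := by
  have hpair : ∀ q₁ q₂, ∃ a : A, ∀ q₁₂, MQ.add q₁ q₂ = some q₁₂ →
      ∃ w, MX.add (η q₁) (η q₂) = some w ∧ MX.add (i a) w = some (η q₁₂) := by
    intro q₁ q₂
    cases hq : MQ.add q₁ q₂ with
    | none => exact ⟨0, by simp⟩
    | some q₁₂ =>
      obtain ⟨w, hw, hπw⟩ := hquot.exists_add_section hη hq
      obtain ⟨a, ha⟩ := (hquot.orbit w (η q₁₂)).mp (by rw [hπw, hη])
      exact ⟨a, fun _ h => Option.some.inj h ▸ ⟨w, hw, ha⟩⟩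
  choose β hβ using hpair
  exact ⟨β, hβ⟩

theorem BetaSpec.eq_of_betaSpec (hfree : FreeAction MX i) {β' : Q → Q → A}
    (hβ : BetaSpec MX MQ i η β) (hβ' : BetaSpec MX MQ i η β') {q₁ q₂ q₁₂ : Q}
    (hq : MQ.add q₁ q₂ = some q₁₂) : β q₁ q₂ = β' q₁ q₂ := by
  obtain ⟨w, hw, ha⟩ := hβ q₁ q₂ q₁₂ hq
  obtain ⟨w', hw', ha'⟩ := hβ' q₁ q₂ q₁₂ hq
  obtain rfl : w = w' := Option.some.inj (hw.symm.trans hw')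
  exact hfree _ _ _ _ ha ha'

section LocalTriv

variable {C : Set X} {φ : X → A × Q}

theorem AgreesOnC.section_proj_mem (hagree : AgreesOnC MX i π C φ η) (hC : IsSubPCM MX i C)
    {x : X} (hx : x ∈ C) : η (π x) ∈ C :=
  hC.2.2.2 _ _ _ (hC.2.1 _) hx (hagree x hx)

theorem AgreesOnC.fst_section_proj (hagree : AgreesOnC MX i π C φ η) (hC : IsSubPCM MX i C)
    (hφ : IsLocalTriv MX MQ i π C φ) {x : X} (hx : x ∈ C) : (φ (η (π x))).1 = 0 := by
  have h := (hφ.1 _ _ _ (hC.2.1 _) hx (hagree x hx)).2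
  rw [hφ.2.1] at h
  simpa using h

theorem AgreesOnC.section_proj_of_fst_eq_zero (hagree : AgreesOnC MX i π C φ η)
    (hemb : EmbedData MX i) {w : X} (hw : w ∈ C) (hφw : (φ w).1 = 0) : η (π w) = w := by
  have h := hagree w hw
  rw [hφw, neg_zero, hemb.map_zero, MX.zero_add] at h
  exact (Option.some.inj h).symm

theorem AgreesOnC.section_proj_add (hagree : AgreesOnC MX i π C φ η) (hemb : EmbedData MX i)
    (hC : IsSubPCM MX i C) (hφ : IsLocalTriv MX MQ i π C φ) {x y w : X} (hx : x ∈ C)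
    (hy : y ∈ C) (hw : MX.add (η (π x)) (η (π y)) = some w) : η (π w) = w := by
  have hx' := hagree.section_proj_mem hC hx
  have hy' := hagree.section_proj_mem hC hy
  refine hagree.section_proj_of_fst_eq_zero hemb (hC.2.2.2 _ _ _ hx' hy' hw) ?_
  rw [(hφ.1 _ _ _ hx' hy' hw).2, hagree.fst_section_proj hC hφ hx,
    hagree.fst_section_proj hC hφ hy, add_zero]

theorem BetaSpec.eq_zero_of_mem (hβ : BetaSpec MX MQ i η β) (hemb : EmbedData MX i)
    (hquot : QuotData MX MQ i π) (hfree : FreeAction MX i) (hη : IsSection π η)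
    (hC : IsSubPCM MX i C) (hφ : IsLocalTriv MX MQ i π C φ)
    (hagree : AgreesOnC MX i π C φ η) {x y : X} (hx : x ∈ C) (hy : y ∈ C) {q : Q}
    (hq : MQ.add (π x) (π y) = some q) : β (π x) (π y) = 0 := by
  obtain ⟨w, hw, ha⟩ := hβ _ _ _ hq
  have hπw : π w = q := hquot.proj_eq_of_add hw (by rw [hη, hη]; exact hq)
  have hηq : η q = w := hπw ▸ hagree.section_proj_add hemb hC hφ hx hy hw
  exact hfree.eq_zero_of_add_eq_self hemb (hηq ▸ ha)

end LocalTriv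

theorem BetaSpec.add_left_section (hβ : BetaSpec MX MQ i η β) (hemb : EmbedData MX i)
    {q₁ q₂ q₁₂ q₃ t : Q} (h12 : MQ.add q₁ q₂ = some q₁₂) (ht : MQ.add q₁₂ q₃ = some t)
    {w s : X} (hw : MX.add (η q₁) (η q₂) = some w) (hs : MX.add w (η q₃) = some s) :
    MX.add (i (β q₁₂ q₃ + β q₁ q₂)) s = some (η t) := by
  obtain ⟨w', hw', ha'⟩ := hβ _ _ _ h12
  obtain rfl : w = w' := Option.some.inj (hw.symm.trans hw')
  obtain ⟨u, hu, hau⟩ := hβ _ _ _ ht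
  exact hemb.add_add (MX.add_eq_of_add_left ha' hs hu) hau

theorem BetaSpec.add_right_section (hβ : BetaSpec MX MQ i η β) (hemb : EmbedData MX i)
    {q₁ q₂ q₃ q₂₃ t : Q} (h23 : MQ.add q₂ q₃ = some q₂₃) (ht : MQ.add q₁ q₂₃ = some t)
    {w s : X} (hw : MX.add (η q₂) (η q₃) = some w) (hs : MX.add (η q₁) w = some s) :
    MX.add (i (β q₁ q₂₃ + β q₂ q₃)) s = some (η t) := by
  obtain ⟨w', hw', ha'⟩ := hβ _ _ _ h23
  obtain rfl : w = w' := Option.some.inj (hw.symm.trans hw')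
  obtain ⟨v, hv, hav⟩ := hβ _ _ _ ht
  exact hemb.add_add (MX.add_eq_of_add_right ha' hs hv) hav

theorem BetaSpec.cocycle (hβ : BetaSpec MX MQ i η β) (hemb : EmbedData MX i)
    (hquot : QuotData MX MQ i π) (hfree : FreeAction MX i) (hη : IsSection π η)
    {q₁ q₂ q₃ q₁₂ q₂₃ t : Q} (h12 : MQ.add q₁ q₂ = some q₁₂)
    (h23 : MQ.add q₂ q₃ = some q₂₃) (ht : MQ.add q₁₂ q₃ = some t) :
    β q₂ q₃ - β q₁₂ q₃ + β q₁ q₂₃ - β q₁ q₂ = 0 := by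
  have h123 : MQ.add q₁ q₂₃ = some t := (MQ.assoc _ _ _ _ _ h12 h23).symm.trans ht
  obtain ⟨w₁₂, hw₁₂, hπ12⟩ := hquot.exists_add_section hη h12
  obtain ⟨w₂₃, hw₂₃, -⟩ := hquot.exists_add_section hη h23
  obtain ⟨s, hs⟩ := Option.isSome_iff_exists.mp
    (hquot.lift w₁₂ (η q₃) t (by rw [hπ12, hη]; exact ht))
  have hs' : MX.add (η q₁) w₂₃ = some s := (MX.assoc _ _ _ _ _ hw₁₂ hw₂₃).symm.trans hs
  have hsame : β q₁₂ q₃ + β q₁ q₂ = β q₁ q₂₃ + β q₂ q₃ :=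
    hfree _ _ _ _ (hβ.add_left_section hemb h12 ht hw₁₂ hs)
      (hβ.add_right_section hemb h23 h123 hw₂₃ hs')
  calc β q₂ q₃ - β q₁₂ q₃ + β q₁ q₂₃ - β q₁ q₂
      = (β q₁ q₂₃ + β q₂ q₃) - (β q₁₂ q₃ + β q₁ q₂) := by abel
    _ = 0 := by rw [hsame, sub_self]

end Cocycle

/-- The obstruction cochain is a well-defined relative 2-cocycle
`β ∈ Z²(X/A, C/A; A)`: a `β` satisfying the defining equation exists, is
uniquely determined on defined pairs (by freeness), vanishes on `(C/A)₂`
(since `η` restricted to `C/A` is a homomorphism), and satisfies the 2-cocycle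
identity `β(q₂,q₃) − β(q₁+q₂,q₃) + β(q₁,q₂+q₃) − β(q₁,q₂) = 0`. -/
theorem beta_is_relative_cocycle {A X Q : Type*} [AddCommGroup A]
    (MX : PCM X) (MQ : PCM Q) (i : A → X) (π : X → Q)
    (hemb : EmbedData MX i) (hquot : QuotData MX MQ i π)
    (hfree : FreeAction MX i)
    (C : Set X) (hC : IsSubPCM MX i C)
    (φ : X → A × Q) (hφ : IsLocalTriv MX MQ i π C φ)
    (η : Q → X) (hη : IsSection π η) (hagree : AgreesOnC MX i π C φ η) :
    (∃ β : Q → Q → A, BetaSpec MX MQ i η β) ∧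
    (∀ β β' : Q → Q → A, BetaSpec MX MQ i η β → BetaSpec MX MQ i η β' →
      ∀ q₁ q₂ q₁₂, MQ.add q₁ q₂ = some q₁₂ → β q₁ q₂ = β' q₁ q₂) ∧
    (∀ β : Q → Q → A, BetaSpec MX MQ i η β →
      (∀ x ∈ C, ∀ y ∈ C, ∀ q, MQ.add (π x) (π y) = some q → β (π x) (π y) = 0) ∧
      (∀ q₁ q₂ q₃ q₁₂ q₂₃ t,
        MQ.add q₁ q₂ = some q₁₂ → MQ.add q₂ q₃ = some q₂₃ →
        MQ.add q₁₂ q₃ = some t →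
        β q₂ q₃ - β q₁₂ q₃ + β q₁ q₂₃ - β q₁ q₂ = 0)) :=
  ⟨exists_betaSpec hquot hη,
    fun _ _ hβ hβ' _ _ _ hq => hβ.eq_of_betaSpec hfree hβ' hq,
    fun _ hβ =>
      ⟨fun _ hx _ hy _ hq => hβ.eq_zero_of_mem hemb hquot hfree hη hC hφ hagree hx hy hq,
        fun _ _ _ _ _ _ h12 h23 ht => hβ.cocycle hemb hquot hfree hη h12 h23 ht⟩⟩
end
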